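/- Let M be a binary matroid and C a circuit of M with k ≥ 4 elements. If C has a chord, then e_C ∈ ℑ(𝔠_{k−1}), the ideal generated by differentials of circuits with fewer than k elements. -/
import Mathlib


open ExteriorAlgebra

/-- The Grassmann algebra over `K` on generators `e 0, ..., e (n-1)`. -/
abbrev Grass (K : Type) [Field K] (n : ℕ) := ExteriorAlgebra K (Fin n → K)

/-- The generator `e i`. -/
noncomputable def gen (K : Type) [Field K] (n : ℕ) (i : Fin n) : Grass K n :=
  ExteriorAlgebra.ι K (Pi.single i 1)

/-- The monomial associated to a list of indices. -/
noncomputable def monList (K : Type) [Field K] (n : ℕ) (l : List (Fin n)) : Grass K n :=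
  (l.map (gen K n)).prod

/-- The monomial `e_X` of a subset `X ⊆ [n]`, factors in increasing order. -/
noncomputable def mon (K : Type) [Field K] (n : ℕ) (X : Finset (Fin n)) : Grass K n :=
  monList K n (X.sort (· ≤ ·))

/-- The degree `-1` antiderivation `∂` on the Grassmann algebra with `∂ (e i) = 1`
(left contraction with the covector sending each generator to `1`). -/
noncomputable def bd (K : Type) [Field K] (n : ℕ) : Grass K n →ₗ[K] Grass K n :=
  CliffordAlgebra.contractLeft (∑ i : Fin n, LinearMap.proj i)

/-- The two-sided ideal `ℑ(𝔛)` generated by the differentials `∂ e_Y`, `Y ∈ 𝔛`. -/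
noncomputable def OSIdeal (K : Type) [Field K] (n : ℕ) (X : Set (Finset (Fin n))) :
    TwoSidedIdeal (Grass K n) :=
  TwoSidedIdeal.span ((fun Y => bd K n (mon K n Y)) '' X)

section Aux

variable (K : Type) [Field K] (n : ℕ)

lemma gen_sq (i : Fin n) : gen K n i * gen K n i = 0 :=
  ExteriorAlgebra.ι_sq_zero _

lemma gen_anticomm (i j : Fin n) :
    gen K n i * gen K n j = -(gen K n j * gen K n i) :=
  eq_neg_of_add_eq_zero_left (ExteriorAlgebra.ι_add_mul_swap _ _)

lemma monList_nil : monList K n [] = 1 := rfl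

lemma monList_cons (i : Fin n) (l : List (Fin n)) :
    monList K n (i :: l) = gen K n i * monList K n l := by
  simp [monList]

lemma monList_append (l₁ l₂ : List (Fin n)) :
    monList K n (l₁ ++ l₂) = monList K n l₁ * monList K n l₂ := by
  simp [monList]

lemma bd_gen_mul (i : Fin n) (y : Grass K n) :
    bd K n (gen K n i * y) = y - gen K n i * bd K n y := by
  unfold bd gen
  rw [CliffordAlgebra.contractLeft_ι_mul]
  congr 1
  have : (∑ j : Fin n, LinearMap.proj j : Module.Dual K (Fin n → K))
      (Pi.single i 1) = 1 := by
    simp [Finset.sum_pi_single']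
  rw [this, one_smul]

lemma bd_one : bd K n 1 = 0 := by
  unfold bd
  exact CliffordAlgebra.contractLeft_one (Q := (0 : QuadraticForm K (Fin n → K))) _

lemma gen_mul_monList_swap (i : Fin n) (l : List (Fin n)) :
    gen K n i * monList K n l = (-1 : K) ^ l.length • (monList K n l * gen K n i) := by
  induction l with
  | nil => simp [monList_nil]
  | cons a t iht =>
    rw [monList_cons, ← mul_assoc, gen_anticomm K n i a, neg_mul, mul_assoc, iht,
      mul_smul_comm, ← mul_assoc, ← neg_smul]
    congr 1
    simp [pow_succ, mul_comm]

lemma gen_mul_bd_monList (i : Fin n) (l : List (Fin n)) :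
    gen K n i * bd K n (monList K n l)
      = (-1 : K) ^ (l.length + 1) • (bd K n (monList K n l) * gen K n i) := by
  induction l with
  | nil => simp [monList_nil, bd_one]
  | cons j l ih =>
    have e1 : gen K n i * (gen K n j * bd K n (monList K n l))
        = (-1 : K) ^ l.length • (gen K n j * bd K n (monList K n l) * gen K n i) := by
      rw [← mul_assoc, gen_anticomm K n i j, neg_mul, mul_assoc, ih,
        mul_smul_comm, ← mul_assoc, ← neg_smul]
      congr 1
      simp [pow_succ, mul_comm]
    rw [monList_cons, bd_gen_mul, mul_sub, sub_mul, gen_mul_monList_swap, e1,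
      ← smul_sub]
    congr 1
    simp [pow_succ, List.length_cons]

lemma monList_perm {K : Type} [Field K] {n : ℕ} {l₁ l₂ : List (Fin n)}
    (h : l₁.Perm l₂) :
    monList K n l₁ = monList K n l₂ ∨ monList K n l₁ = -monList K n l₂ := by
  induction h with
  | nil => left; rfl
  | cons x _ ih =>
    rcases ih with h' | h'
    · left; rw [monList_cons, monList_cons, h']
    · right; rw [monList_cons, monList_cons, h', mul_neg]
  | swap x y l =>
    right
    rw [monList_cons, monList_cons, monList_cons, monList_cons, ← mul_assoc,
      ← mul_assoc, gen_anticomm K n y x, neg_mul]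
  | trans _ _ ih₁ ih₂ =>
    rcases ih₁ with h₁ | h₁ <;> rcases ih₂ with h₂ | h₂
    · left; rw [h₁, h₂]
    · right; rw [h₁, h₂]
    · right; rw [h₁, h₂]
    · left; rw [h₁, h₂, neg_neg]

/-- The key algebraic identity. -/
lemma key_identity (i : Fin n) (a b : Grass K n)
    (h : gen K n i * bd K n a * gen K n i = 0) :
    a * b = bd K n (gen K n i * a) * b
      + (gen K n i * bd K n a) * bd K n (gen K n i * b) := by
  have h1 := bd_gen_mul K n i a
  have h2 := bd_gen_mul K n i b
  have hz : (gen K n i * bd K n a) * (gen K n i * bd K n b) = 0 := by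
    have e : (gen K n i * bd K n a) * (gen K n i * bd K n b)
        = (gen K n i * bd K n a * gen K n i) * bd K n b := by noncomm_ring
    rw [e, h, zero_mul]
  rw [h1, sub_mul, h2, mul_sub, hz]
  abel

end Aux

/-- A circuit of a matroid: a minimal dependent (finite) set. -/
def IsCircuit {α : Type} [DecidableEq α] (M : Matroid α) (C : Finset α) : Prop :=
  M.Dep (C : Set α) ∧ ∀ D : Finset α, D ⊂ C → ¬ M.Dep (D : Set α)

/-- `i` is a chord of the circuit `C`, witnessed by circuits `C₁, C₂` with
`C₁ ∩ C₂ = {i}` and `C = C₁ Δ C₂`. -/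
def IsChord {α : Type} [DecidableEq α] (M : Matroid α) (C : Finset α) (i : α) : Prop :=
  ∃ C₁ C₂ : Finset α, IsCircuit M C₁ ∧ IsCircuit M C₂ ∧ C₁ ∩ C₂ = {i} ∧ C = symmDiff C₁ C₂

def HasChord {α : Type} [DecidableEq α] (M : Matroid α) (C : Finset α) : Prop :=
  ∃ i, IsChord M C i

/-- `M` is `ℓ`-chordal: every circuit with at least `ℓ` elements has a chord. -/
def Chordal {α : Type} [DecidableEq α] (M : Matroid α) (l : ℕ) : Prop :=
  ∀ C : Finset α, IsCircuit M C → l ≤ C.card → HasChord M C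

/-- `M` is simple: every circuit has at least 3 elements. -/
def SimpleM {α : Type} [DecidableEq α] (M : Matroid α) : Prop :=
  ∀ C : Finset α, IsCircuit M C → 3 ≤ C.card

/-- `M` is binary: the symmetric difference of two distinct circuits contains a circuit. -/
def BinaryM {α : Type} [DecidableEq α] (M : Matroid α) : Prop :=
  ∀ C D : Finset α, IsCircuit M C → IsCircuit M D → C ≠ D →
    ∃ C', IsCircuit M C' ∧ C' ⊆ symmDiff C D

/-- The set `𝔠` of circuits of `M`. -/
def Circuits {α : Type} [DecidableEq α] (M : Matroid α) : Set (Finset α) :=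
  {C | IsCircuit M C}

/-- The set `𝔠_k` of circuits of `M` with at most `k` elements. -/
def CircuitsLe {α : Type} [DecidableEq α] (M : Matroid α) (k : ℕ) : Set (Finset α) :=
  {C | IsCircuit M C ∧ C.card ≤ k}

/-- in a binary matroid, if a circuit `C` with `|C| = k ≥ 4` has a chord,
then `e_C ∈ ℑ(𝔠_{k-1})`. -/
theorem stmt8 (K : Type) [Field K] (n : ℕ) (M : Matroid (Fin n)) (hE : M.E = Set.univ)
    (hs : SimpleM M) (hb : BinaryM M) (C : Finset (Fin n)) (hC : IsCircuit M C)
    (hk : 4 ≤ C.card) (hch : HasChord M C) :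
    mon K n C ∈ OSIdeal K n (CircuitsLe M (C.card - 1)) := by
  classical
  obtain ⟨i, C₁, C₂, hC₁, hC₂, hint, hsd⟩ := hch
  set I := OSIdeal K n (CircuitsLe M (C.card - 1)) with hI
  have hxi : ∀ x, x ∈ C₁ → x ∈ C₂ → x = i := by
    intro x h1 h2
    have : x ∈ C₁ ∩ C₂ := Finset.mem_inter.mpr ⟨h1, h2⟩
    rwa [hint, Finset.mem_singleton] at this
  have hi1 : i ∈ C₁ := by
    have : i ∈ C₁ ∩ C₂ := by rw [hint]; exact Finset.mem_singleton_self i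
    exact (Finset.mem_inter.mp this).1
  have hi2 : i ∈ C₂ := by
    have : i ∈ C₁ ∩ C₂ := by rw [hint]; exact Finset.mem_singleton_self i
    exact (Finset.mem_inter.mp this).2
  set A := C₁.erase i with hA
  set B := C₂.erase i with hBdef
  have hiA : i ∉ A := Finset.notMem_erase i C₁
  have hiB : i ∉ B := Finset.notMem_erase i C₂
  have hdisj : Disjoint A B := by
    rw [Finset.disjoint_left]
    intro x hxA hxB
    exact (Finset.ne_of_mem_erase hxA)
      (hxi x (Finset.mem_of_mem_erase hxA) (Finset.mem_of_mem_erase hxB))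
  have hCeq : C = A.disjUnion B hdisj := by
    rw [Finset.disjUnion_eq_union, hsd]
    ext x
    simp only [Finset.mem_symmDiff, Finset.mem_union, hA, hBdef, Finset.mem_erase]
    constructor
    · rintro (⟨h1, h2⟩ | ⟨h1, h2⟩)
      · exact Or.inl ⟨fun hx => h2 (hx ▸ hi2), h1⟩
      · exact Or.inr ⟨fun hx => h2 (hx ▸ hi1), h1⟩
    · rintro (⟨h1, h2⟩ | ⟨h1, h2⟩)
      · exact Or.inl ⟨h2, fun hx => h1 (hxi x h2 hx)⟩
      · exact Or.inr ⟨h2, fun hx => h1 (hxi x hx h2)⟩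
  have hcA : A.card + 1 = C₁.card := Finset.card_erase_add_one hi1
  have hcB : B.card + 1 = C₂.card := Finset.card_erase_add_one hi2
  have hcC : C.card = A.card + B.card := by rw [hCeq]; exact Finset.card_disjUnion _ _ _
  have h3a : 3 ≤ C₁.card := hs C₁ hC₁
  have h3b : 3 ≤ C₂.card := hs C₂ hC₂
  have hle1 : C₁.card ≤ C.card - 1 := by omega
  have hle2 : C₂.card ≤ C.card - 1 := by omega
  have hg1 : bd K n (mon K n C₁) ∈ I :=
    TwoSidedIdeal.subset_span ⟨C₁, ⟨hC₁, hle1⟩, rfl⟩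
  have hg2 : bd K n (mon K n C₂) ∈ I :=
    TwoSidedIdeal.subset_span ⟨C₂, ⟨hC₂, hle2⟩, rfl⟩
  have p1 : (i :: A.sort (· ≤ ·)).Perm (C₁.sort (· ≤ ·)) := by
    refine ((Finset.sort_perm_toList _ _).cons i).trans ?_
    have h := Finset.toList_insert hiA
    rw [hA, Finset.insert_erase hi1] at h
    exact h.symm.trans (Finset.sort_perm_toList _ _).symm
  have p2 : (i :: B.sort (· ≤ ·)).Perm (C₂.sort (· ≤ ·)) := by
    refine ((Finset.sort_perm_toList _ _).cons i).trans ?_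
    have h := Finset.toList_insert hiB
    rw [hBdef, Finset.insert_erase hi2] at h
    exact h.symm.trans (Finset.sort_perm_toList _ _).symm
  have pC : (C.sort (· ≤ ·)).Perm (A.sort (· ≤ ·) ++ B.sort (· ≤ ·)) := by
    apply Multiset.coe_eq_coe.mp
    rw [← Multiset.coe_add]
    show ((C.sort (· ≤ ·) : List (Fin n)) : Multiset (Fin n))
      = ((A.sort (· ≤ ·) : List (Fin n)) : Multiset (Fin n)) + (B.sort (· ≤ ·) : List (Fin n))
    rw [Finset.sort_eq, Finset.sort_eq, Finset.sort_eq, hCeq]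
    rfl
  set a := monList K n (A.sort (· ≤ ·)) with ha
  set b := monList K n (B.sort (· ≤ ·)) with hb'
  have hzero : gen K n i * bd K n a * gen K n i = 0 := by
    rw [ha, gen_mul_bd_monList, smul_mul_assoc, mul_assoc, gen_sq, mul_zero, smul_zero]
  have hkey := key_identity K n i a b hzero
  have mem1 : bd K n (gen K n i * a) ∈ I := by
    have e : gen K n i * a = monList K n (i :: A.sort (· ≤ ·)) :=
      (monList_cons K n i _).symm
    rcases monList_perm (K := K) p1 with he | he
    · rw [e, he]; exact hg1
    · rw [e, he, map_neg]; exact I.neg_mem hg1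
  have mem2 : bd K n (gen K n i * b) ∈ I := by
    have e : gen K n i * b = monList K n (i :: B.sort (· ≤ ·)) :=
      (monList_cons K n i _).symm
    rcases monList_perm (K := K) p2 with he | he
    · rw [e, he]; exact hg2
    · rw [e, he, map_neg]; exact I.neg_mem hg2
  have hab : a * b ∈ I := by
    rw [hkey]
    exact I.add_mem (I.mul_mem_right _ _ mem1) (I.mul_mem_left _ _ mem2)
  show monList K n (C.sort (· ≤ ·)) ∈ I
  rcases monList_perm (K := K) pC with he | he
  · rw [he, monList_append]; exact hab
  · rw [he, monList_append]; exact I.neg_mem hab
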